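/- Let 0 < λ < μ and ν > 0. Let X ~ Exp(λ), T ~ Exp(μ−λ) and S ~ Exp(μ) be mutually independent, and set Y = S + max(X − T, 0). Then E[e^{−νY}] = λ/(λ+ν). -/

import Mathlib

/-!
Since `S` is independent of `(T, X)`, `E[e^{-νY}] = E[e^{-νS}] · E[e^{-ν (X - T)⁺}]`, and the
first factor is the Laplace transform `μ / (μ + ν)` of `Exp(μ)`. Given `T = t ≥ 0`, memorylessness
of `X` gives `E[e^{-ν (X - t)⁺}] = P(X ≤ t) + e^{-λt} · λ / (λ + ν) = 1 - ν / (λ + ν) · e^{-λt}`;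
averaging over `T ~ Exp(μ - λ)` yields `1 - ν (μ - λ) / ((λ + ν) μ)`, and the product of the two
factors is `λ / (λ + ν)`.
-/

open MeasureTheory ProbabilityTheory Real Set
open scoped ProbabilityTheory

namespace ProbabilityTheory

variable {r : ℝ}

lemma exponentialPDFReal_of_nonneg {x : ℝ} (hx : 0 ≤ x) :
    exponentialPDFReal r x = r * exp (-r * x) := by
  simp [exponentialPDFReal, gammaPDFReal, hx]

lemma exponentialPDFReal_of_neg {x : ℝ} (hx : x < 0) : exponentialPDFReal r x = 0 := by
  simp [exponentialPDFReal, gammaPDFReal, hx.not_ge]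

lemma ae_nonneg_expMeasure : ∀ᵐ x ∂expMeasure r, 0 ≤ x := by
  have hdens : expMeasure r = volume.withDensity fun x => exponentialPDF r x := rfl
  have hneg : {x : ℝ | ¬0 ≤ x} = Iio 0 := by ext; simp
  rw [ae_iff, hneg, hdens, withDensity_apply _ measurableSet_Iio]
  exact lintegral_exponentialPDF_of_nonpos le_rfl

lemma setIntegral_expMeasure (hr : 0 < r) (f : ℝ → ℝ) {s : Set ℝ} (hs : MeasurableSet s) :
    ∫ x in s, f x ∂expMeasure r = ∫ x in s, exponentialPDFReal r x * f x := by
  have hdens : expMeasure r = volume.withDensity fun x => exponentialPDF r x := rfl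
  rw [hdens, setIntegral_withDensity_eq_setIntegral_toReal_smul (f := exponentialPDF r)
    (measurable_exponentialPDFReal r).ennreal_ofReal
    (ae_of_all _ fun _ => ENNReal.ofReal_lt_top) f hs]
  exact setIntegral_congr_fun hs fun x _ => by
    rw [exponentialPDF, ENNReal.toReal_ofReal (exponentialPDFReal_nonneg hr x), smul_eq_mul]

lemma integral_expMeasure (hr : 0 < r) (f : ℝ → ℝ) :
    ∫ x, f x ∂expMeasure r = ∫ x in Ioi 0, r * exp (-r * x) * f x := by
  have hneg : ∀ x ∉ Ici (0 : ℝ), exponentialPDFReal r x * f x = 0 := fun x hx => by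
    rw [exponentialPDFReal_of_neg (not_le.1 hx), zero_mul]
  rw [← setIntegral_univ, setIntegral_expMeasure hr f MeasurableSet.univ, setIntegral_univ,
    ← setIntegral_eq_integral_of_forall_compl_eq_zero hneg, integral_Ici_eq_integral_Ioi]
  exact setIntegral_congr_fun measurableSet_Ioi fun x hx => by
    rw [exponentialPDFReal_of_nonneg (le_of_lt hx)]

/-- Memorylessness of the exponential distribution. -/
lemma setIntegral_Ioi_comp_sub_expMeasure (hr : 0 < r) {t : ℝ} (ht : 0 ≤ t) (g : ℝ → ℝ) :
    ∫ x in Ioi t, g (x - t) ∂expMeasure r = exp (-r * t) * ∫ x, g x ∂expMeasure r := by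
  have hdens : ∀ x ∈ Ioi t, exponentialPDFReal r x * g (x - t)
      = exp (-r * t) * (r * exp (-r * (x - t)) * g (x - t)) := fun x hx => by
    have hsplit : exp (-r * x) = exp (-r * t) * exp (-r * (x - t)) := by
      rw [← exp_add]; ring_nf
    rw [exponentialPDFReal_of_nonneg (ht.trans (le_of_lt hx)), hsplit]
    ring
  have hshift := (measurePreserving_sub_right volume t).setIntegral_preimage_emb
    (measurableEmbedding_subRight t) (fun y => r * exp (-r * y) * g y) (Ioi 0)
  rw [preimage_sub_const_Ioi, zero_add] at hshift
  rw [setIntegral_expMeasure hr _ measurableSet_Ioi, setIntegral_congr_fun measurableSet_Ioi hdens,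
    integral_const_mul, hshift, integral_expMeasure hr]

lemma integral_exp_neg_mul_expMeasure (hr : 0 < r) {b : ℝ} (hrb : 0 < r + b) :
    ∫ x, exp (-b * x) ∂expMeasure r = r / (r + b) := by
  have hexp : ∀ x ∈ Ioi (0 : ℝ), r * exp (-r * x) * exp (-b * x) = r * exp (-((r + b) * x)) :=
    fun x _ => by rw [mul_assoc, ← exp_add]; ring_nf
  have hIoi : ∫ x in Ioi (0 : ℝ), exp (-((r + b) * x)) = (r + b)⁻¹ := by
    have := integral_comp_mul_left_Ioi (fun x => exp (-x)) 0 hrb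
    rwa [mul_zero, integral_exp_neg_Ioi_zero, smul_eq_mul, mul_one] at this
  rw [integral_expMeasure hr, setIntegral_congr_fun measurableSet_Ioi hexp, integral_const_mul,
    hIoi, div_eq_mul_inv]

lemma integrable_exp_neg_mul_expMeasure (hr : 0 < r) {b : ℝ} (hrb : 0 < r + b) :
    Integrable (fun x => exp (-b * x)) (expMeasure r) :=
  .of_integral_ne_zero <| by rw [integral_exp_neg_mul_expMeasure hr hrb]; positivity

lemma norm_exp_neg_mul_max_le_one {ν : ℝ} (hν : 0 ≤ ν) (y : ℝ) : ‖exp (-ν * max y 0)‖ ≤ 1 := by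
  rw [norm_of_nonneg (exp_pos _).le, exp_le_one_iff]
  exact mul_nonpos_of_nonpos_of_nonneg (neg_nonpos.2 hν) (le_max_right _ _)

lemma integral_exp_neg_mul_max_sub_expMeasure (hr : 0 < r) {ν t : ℝ} (hν : 0 ≤ ν) (ht : 0 ≤ t) :
    ∫ x, exp (-ν * max (x - t) 0) ∂expMeasure r = 1 - ν / (r + ν) * exp (-r * t) := by
  have := isProbabilityMeasure_expMeasure hr
  have hint : Integrable (fun x => exp (-ν * max (x - t) 0)) (expMeasure r) :=
    (integrable_const 1).mono' (by fun_prop)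
      (ae_of_all _ fun _ => norm_exp_neg_mul_max_le_one hν _)
  have hIoi : ∫ x in Ioi t, exp (-ν * max (x - t) 0) ∂expMeasure r
      = exp (-r * t) * (r / (r + ν)) := by
    rw [setIntegral_congr_fun measurableSet_Ioi (g := fun x => exp (-ν * (x - t)))
      fun x hx => by rw [max_eq_left (sub_nonneg.2 (le_of_lt hx))],
      setIntegral_Ioi_comp_sub_expMeasure hr ht fun y => exp (-ν * y),
      integral_exp_neg_mul_expMeasure hr (by linarith)]
  have hIic : ∫ x in (Ioi t)ᶜ, exp (-ν * max (x - t) 0) ∂expMeasure r = 1 - exp (-r * t) := by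
    rw [compl_Ioi, setIntegral_congr_fun measurableSet_Iic (g := fun _ => (1 : ℝ))
      fun x hx => by rw [max_eq_right (sub_nonpos.2 hx), mul_zero, exp_zero],
      setIntegral_const, smul_eq_mul, mul_one, ← cdf_eq_real, cdf_expMeasure_eq hr, if_pos ht,
      neg_mul]
  have hrν : r + ν ≠ 0 := by positivity
  rw [← integral_add_compl measurableSet_Ioi hint, hIoi, hIic]
  field_simp
  ring

lemma aemeasurable_of_map_eq_expMeasure {Ω : Type*} [MeasurableSpace Ω] {P : Measure Ω}
    {X : Ω → ℝ} (hr : 0 < r) (hX : P.map X = expMeasure r) : AEMeasurable X P := by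
  have := isProbabilityMeasure_expMeasure hr
  exact .of_map_ne_zero (hX ▸ IsProbabilityMeasure.ne_zero _)

lemma integral_exp_neg_mul_max_sub_of_indepFun {Ω : Type*} [MeasurableSpace Ω] {P : Measure Ω}
    [IsProbabilityMeasure P] {X T : Ω → ℝ} {c ν : ℝ} (hr : 0 < r) (hc : 0 < c) (hν : 0 ≤ ν)
    (hXlaw : P.map X = expMeasure r) (hTlaw : P.map T = expMeasure c) (hTX : IndepFun T X P) :
    ∫ ω, exp (-ν * max (X ω - T ω) 0) ∂P = 1 - ν / (r + ν) * (c / (c + r)) := by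
  have := isProbabilityMeasure_expMeasure hr
  have := isProbabilityMeasure_expMeasure hc
  have hX := aemeasurable_of_map_eq_expMeasure hr hXlaw
  have hT := aemeasurable_of_map_eq_expMeasure hc hTlaw
  set φ : ℝ × ℝ → ℝ := fun p => exp (-ν * max (p.2 - p.1) 0)
  have hφ : Measurable φ := by fun_prop
  have hlaw : P.map (fun ω => (T ω, X ω)) = (expMeasure c).prod (expMeasure r) := by
    rw [hTX.map_prod_eq_prod_map_map hT hX, hTlaw, hXlaw]
  have hint : Integrable φ ((expMeasure c).prod (expMeasure r)) :=
    (integrable_const 1).mono' hφ.aestronglyMeasurable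
      (ae_of_all _ fun p => norm_exp_neg_mul_max_le_one hν _)
  calc ∫ ω, exp (-ν * max (X ω - T ω) 0) ∂P
      = ∫ p, φ p ∂(expMeasure c).prod (expMeasure r) := by
        rw [← hlaw, integral_map (hT.prodMk hX) hφ.aestronglyMeasurable]
    _ = ∫ t, ∫ x, exp (-ν * max (x - t) 0) ∂expMeasure r ∂expMeasure c := integral_prod φ hint
    _ = ∫ t, (1 - ν / (r + ν) * exp (-r * t)) ∂expMeasure c := by
        refine integral_congr_ae ?_
        filter_upwards [ae_nonneg_expMeasure] with t ht
        exact integral_exp_neg_mul_max_sub_expMeasure hr hν ht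
    _ = 1 - ν / (r + ν) * (c / (c + r)) := by
        rw [integral_sub (integrable_const 1)
          ((integrable_exp_neg_mul_expMeasure hc (by linarith)).const_mul _),
          integral_const_mul, integral_exp_neg_mul_expMeasure hc (by linarith)]
        simp

end ProbabilityTheory

theorem missing_probability_MM1M_general
    {Ω : Type*} [MeasureSpace Ω] [IsProbabilityMeasure (ℙ : Measure Ω)]
    (lam μ ν : ℝ) (h0 : 0 < lam) (h1 : lam < μ) (hν : 0 < ν)
    (X T S : Ω → ℝ)
    (hXdist : Measure.map X ℙ = expMeasure lam)
    (hTdist : Measure.map T ℙ = expMeasure (μ - lam))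
    (hSdist : Measure.map S ℙ = expMeasure μ)
    (hindep : iIndepFun ![X, T, S] ℙ) :
    ∫ ω, Real.exp (-ν * (S ω + max (X ω - T ω) 0)) ∂ℙ = lam / (lam + ν) := by
  have hμl : 0 < μ - lam := sub_pos.2 h1
  have hμ : 0 < μ := h0.trans h1
  have hX := aemeasurable_of_map_eq_expMeasure h0 hXdist
  have hT := aemeasurable_of_map_eq_expMeasure hμl hTdist
  have hS := aemeasurable_of_map_eq_expMeasure hμ hSdist
  have hm : ∀ i, AEMeasurable (![X, T, S] i) ℙ := fun i => by fin_cases i <;> assumption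
  have hTX_S : IndepFun (fun ω => (T ω, X ω)) S ℙ := by
    simpa using hindep.indepFun_prodMk₀ hm 1 0 2 (by decide) (by decide)
  have hS_int : ∫ ω, exp (-ν * S ω) ∂ℙ = μ / (μ + ν) := by
    rw [← integral_map (f := fun s => exp (-ν * s)) hS (by fun_prop), hSdist,
      integral_exp_neg_mul_expMeasure hμ (by linarith)]
  calc ∫ ω, exp (-ν * (S ω + max (X ω - T ω) 0)) ∂ℙ
      = ∫ ω, exp (-ν * max (X ω - T ω) 0) * exp (-ν * S ω) ∂ℙ := by
        simp_rw [mul_add, exp_add, mul_comm]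
    _ = (∫ ω, exp (-ν * max (X ω - T ω) 0) ∂ℙ) * ∫ ω, exp (-ν * S ω) ∂ℙ :=
        (hTX_S.comp (φ := fun p : ℝ × ℝ => exp (-ν * max (p.2 - p.1) 0))
          (ψ := fun s => exp (-ν * s)) (by fun_prop) (by fun_prop)).integral_fun_mul_eq_mul_integral
          (by fun_prop) (by fun_prop)
    _ = (1 - ν / (lam + ν) * ((μ - lam) / (μ - lam + lam))) * (μ / (μ + ν)) := by
        rw [integral_exp_neg_mul_max_sub_of_indepFun h0 hμl hν.le hXdist hTdist
          (hindep.indepFun (i := 1) (j := 0) (by decide)), hS_int]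
    _ = lam / (lam + ν) := by
        field_simp
        ring

/-- Missing probability of the M/M/1/M update-and-decide system:
`E[e^{-ν Y}] = λ/(λ+ν)`, where `X ~ Exp(λ)`, `T ~ Exp(μ-λ)`, `S ~ Exp(μ)` are
independent and `Y = S + max (X - T) 0`. -/
theorem missing_probability_MM1M
    {Ω : Type*} [MeasureSpace Ω] [IsProbabilityMeasure (ℙ : Measure Ω)]
    (lam μ ν : ℝ) (h0 : 0 < lam) (h1 : lam < μ) (hν : 0 < ν)
    (X T S : Ω → ℝ)
    (hXmeas : Measurable X) (hTmeas : Measurable T) (hSmeas : Measurable S)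
    (hXdist : Measure.map X ℙ = expMeasure lam)
    (hTdist : Measure.map T ℙ = expMeasure (μ - lam))
    (hSdist : Measure.map S ℙ = expMeasure μ)
    (hindep : iIndepFun ![X, T, S] ℙ) :
    ∫ ω, Real.exp (-ν * (S ω + max (X ω - T ω) 0)) ∂ℙ = lam / (lam + ν) :=
  missing_probability_MM1M_general lam μ ν h0 h1 hν X T S hXdist hTdist hSdist hindep
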